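/- arXiv:1601.05006 — 2 statements merged into one kernel-verified Lean document; each statement's English description precedes it below -/
import Mathlib

section
/- Let n be even and set I_k := (x_{2k+2} x_{2k+4} ⋯ x_n)/(x_{2k+1} x_{2k+3} ⋯ x_{n−1}). Then for any j: {I_k, x_j} = 0 if j ≤ 2k, and {I_k, x_j} = −I_k x_j if j > 2k; consequently {I_k, v_j} = 0 if j ≤ 2k and {I_k, v_j} = −I_k (v_j − v_{2k}) if j > 2k, where v_j = Σ_{m≤j} a_m x_m. -/
open Finset Real

/-- partial derivative of `f` in the `i`-th coordinate direction -/
noncomputable def pd {n : ℕ} (i : Fin n) (f : (Fin n → ℝ) → ℝ) (x : Fin n → ℝ) : ℝ :=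
  fderiv ℝ f x (Pi.single i 1)

/-- the quadratic Poisson bracket `{x_i,x_j} = x_i x_j` for `i < j` -/
noncomputable def pb {n : ℕ} (f g : (Fin n → ℝ) → ℝ) (x : Fin n → ℝ) : ℝ :=
  ∑ i : Fin n, ∑ j : Fin n,
    if i < j then x i * x j * (pd i f x * pd j g x - pd j f x * pd i g x) else 0

/-- `v a j x = a_1 x_1 + ⋯ + a_j x_j` (sum of the first `j` terms, 1-based). -/
noncomputable def v {n : ℕ} (a : Fin n → ℝ) (j : ℕ) (x : Fin n → ℝ) : ℝ :=
  ∑ k : Fin n, if (k : ℕ) < j then a k * x k else 0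

/-- right-hand side of the generalized Lotka–Volterra system -/
noncomputable def rhs {n : ℕ} (a : Fin n → ℝ) (x : Fin n → ℝ) (i : Fin n) : ℝ :=
  x i * ((∑ j : Fin n, if i < j then a j * x j else 0)
        - ∑ j : Fin n, if j < i then a j * x j else 0)

/-- `J k = (x_1 x_3 ⋯ x_{2k-1})/(x_2 x_4 ⋯ x_{2k})` (1-based indexing). -/
noncomputable def J {n : ℕ} (k : ℕ) (x : Fin n → ℝ) : ℝ :=
  ∏ m : Fin n, if (m : ℕ) < 2 * k then
    (if (m : ℕ) % 2 = 0 then x m else (x m)⁻¹) else 1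

/-- `I k = (x_{2k+2} x_{2k+4} ⋯ x_n)/(x_{2k+1} x_{2k+3} ⋯ x_{n-1})` (1-based, n even). -/
noncomputable def Ifun {n : ℕ} (k : ℕ) (x : Fin n → ℝ) : ℝ :=
  ∏ m : Fin n, if 2 * k ≤ (m : ℕ) then
    (if (m : ℕ) % 2 = 1 then x m else (x m)⁻¹) else 1

/-!
`I_k` is a Laurent monomial `∏ x_m ^ e_m`, and for a Laurent monomial the quadratic bracket is
`{x^e, g} = x^e · ∑_m (∑_{i<m} e_i - ∑_{i>m} e_i) x_m ∂_m g`.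
For `I_k` the exponents vanish below `2k` and then alternate `-1, +1, …`, with total sum zero
because `n` is even; so the weight of `m` is `0` for `m < 2k` and `-1` for `m ≥ 2k`, i.e.
`{I_k, g} = -I_k ∑_{m ≥ 2k} x_m ∂_m g`. Both claims follow with `∂_m x_j = δ_{mj}` and
`∂_m v_j = a_m [m < j]`.
-/

section AntisymmetricSums

variable {ι R : Type*} [LinearOrder ι] [Fintype ι] [LocallyFiniteOrderBot ι]
  [LocallyFiniteOrderTop ι] [CommRing R]

theorem sum_sum_ite_lt_antisymm (e T : ι → R) :
    ∑ i, ∑ j, (if i < j then e i * T j - e j * T i else 0) =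
      ∑ m, T m * (∑ i < m, e i - ∑ i > m, e i) := by
  have hlt : ∑ i, ∑ j, (if i < j then e i * T j else 0) = ∑ m, T m * ∑ i < m, e i := by
    rw [sum_comm]
    refine sum_congr rfl fun m _ => ?_
    rw [← sum_filter, filter_gt_eq_Iio, mul_sum]
    simp only [mul_comm]
  have hgt : ∑ i, ∑ j, (if i < j then e j * T i else 0) = ∑ m, T m * ∑ i > m, e i := by
    refine sum_congr rfl fun m _ => ?_
    rw [← sum_filter, filter_lt_eq_Ioi, mul_sum]
    simp only [mul_comm]
  simp only [mul_sub, sum_sub_distrib, ← hlt, ← hgt]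
  simp only [← sum_sub_distrib, ite_sub_ite, sub_self]

end AntisymmetricSums

theorem HasFDerivAt.pd_eq {n : ℕ} {f : (Fin n → ℝ) → ℝ} {f' : (Fin n → ℝ) →L[ℝ] ℝ}
    {x : Fin n → ℝ} (h : HasFDerivAt f f' x) (i : Fin n) : pd i f x = f' (Pi.single i 1) := by
  rw [pd, h.fderiv]

theorem pd_coord {n : ℕ} (i j : Fin n) (x : Fin n → ℝ) :
    pd i (fun y => y j) x = if i = j then 1 else 0 := by
  simp [(hasFDerivAt_apply j x).pd_eq, Pi.single_apply, eq_comm]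

theorem pd_sum_mul_coord {n : ℕ} (c : Fin n → ℝ) (i : Fin n) (x : Fin n → ℝ) :
    pd i (fun y => ∑ m, c m * y m) x = c i := by
  have h := HasFDerivAt.fun_sum (u := univ) fun (m : Fin n) _ =>
    (hasFDerivAt_apply (𝕜 := ℝ) (F' := fun _ => ℝ) m x).const_mul (c m)
  simp [h.pd_eq, Pi.single_apply]

theorem pd_v {n : ℕ} (a : Fin n → ℝ) (j : ℕ) (i : Fin n) (x : Fin n → ℝ) :
    pd i (v a j) x = if (i : ℕ) < j then a i else 0 := by
  have hv : v a j = fun y => ∑ m : Fin n, (if (m : ℕ) < j then a m else 0) * y m := by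
    ext y; simp only [v, ite_mul, zero_mul]
  rw [hv, pd_sum_mul_coord]

noncomputable def laurentMonomial {n : ℕ} (e : Fin n → ℤ) (y : Fin n → ℝ) : ℝ :=
  ∏ m, y m ^ e m

theorem pd_laurentMonomial {n : ℕ} (e : Fin n → ℤ) (i : Fin n) {x : Fin n → ℝ}
    (hx : ∀ m, x m ≠ 0) :
    pd i (laurentMonomial e) x = e i * laurentMonomial e x / x i := by
  classical
  have hm (m : Fin n) : HasFDerivAt (fun y : Fin n → ℝ => y m ^ e m)
      ((e m * x m ^ (e m - 1)) • (ContinuousLinearMap.proj m : (Fin n → ℝ) →L[ℝ] ℝ)) x :=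
    (hasDerivAt_zpow (e m) (x m) (.inl (hx m))).comp_hasFDerivAt (h₂ := (· ^ e m)) x
      (hasFDerivAt_apply m x)
  have h : HasFDerivAt (laurentMonomial e) _ x := HasFDerivAt.finsetProd (u := univ) fun m _ => hm m
  rw [h.pd_eq, laurentMonomial, ← mul_prod_erase univ _ (mem_univ i)]
  simp [Pi.single_apply, zpow_sub_one₀ (hx i)]
  ring

theorem pb_laurentMonomial {n : ℕ} (e : Fin n → ℤ) (g : (Fin n → ℝ) → ℝ) {x : Fin n → ℝ}
    (hx : ∀ m, x m ≠ 0) :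
    pb (laurentMonomial e) g x = laurentMonomial e x *
      ∑ m, x m * pd m g x * ((∑ i < m, e i - ∑ i > m, e i : ℤ) : ℝ) := by
  have hterm (i j : Fin n) :
      x i * x j * (pd i (laurentMonomial e) x * pd j g x - pd j (laurentMonomial e) x * pd i g x)
        = laurentMonomial e x * (e i * (x j * pd j g x) - e j * (x i * pd i g x)) := by
    rw [pd_laurentMonomial e i hx, pd_laurentMonomial e j hx]
    field_simp [hx i, hx j]
  simp only [pb, hterm, ← mul_ite_zero, ← mul_sum]
  rw [sum_sum_ite_lt_antisymm]
  push_cast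
  rfl

def ifunExp (k m : ℕ) : ℤ :=
  if 2 * k ≤ m then (if m % 2 = 1 then 1 else -1) else 0

theorem Ifun_eq_laurentMonomial {n : ℕ} (k : ℕ) :
    Ifun (n := n) k = laurentMonomial fun m => ifunExp k m := by
  ext y
  refine prod_congr rfl fun m _ => ?_
  unfold ifunExp
  split_ifs <;> simp [*]

theorem sum_range_ifunExp (k j : ℕ) :
    ∑ i ∈ range j, ifunExp k i = if j ≤ 2 * k ∨ j % 2 = 0 then 0 else -1 := by
  induction j with
  | zero => simp
  | succ j ih =>
    rw [sum_range_succ, ih, ifunExp]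
    split_ifs <;> omega

theorem Fin.sum_Iio_val {M : Type*} [AddCommMonoid M] {n : ℕ} (f : ℕ → M) (m : Fin n) :
    ∑ i < m, f i = ∑ i ∈ range m, f i := by
  rw [← Nat.Iio_eq_range, ← Fin.map_valEmbedding_Iio, sum_map]
  rfl

theorem Fin.sum_Ioi_val {M : Type*} [AddCommGroup M] {n : ℕ} (f : ℕ → M) (m : Fin n) :
    ∑ i > m, f i = ∑ i ∈ range n, f i - ∑ i ∈ range (m + 1), f i := by
  have hIoi : ∑ i > m, f i = ∑ i ∈ Ioo (m : ℕ) n, f i := by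
    rw [← Fin.map_valEmbedding_Ioi, sum_map]
    rfl
  rw [hIoi, ← Ico_add_one_left_eq_Ioo, sum_Ico_eq_sub _ (by omega : (m : ℕ) + 1 ≤ n)]

theorem ifunExp_sum_lt_sub_sum_gt {n : ℕ} (hn : Even n) (k : ℕ) (m : Fin n) :
    ∑ i < m, ifunExp k i - ∑ i > m, ifunExp k i = if (m : ℕ) < 2 * k then 0 else -1 := by
  rw [Fin.sum_Iio_val, Fin.sum_Ioi_val, sum_range_ifunExp, sum_range_ifunExp, sum_range_ifunExp]
  have hn2 : n % 2 = 0 := Nat.even_iff.mp hn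
  split_ifs <;> omega

theorem pb_Ifun {n : ℕ} (hn : Even n) (k : ℕ) (g : (Fin n → ℝ) → ℝ) {x : Fin n → ℝ}
    (hx : ∀ m, x m ≠ 0) :
    pb (Ifun k) g x = -(Ifun k x * ∑ m : Fin n with 2 * k ≤ m.val, x m * pd m g x) := by
  rw [Ifun_eq_laurentMonomial, pb_laurentMonomial _ _ hx]
  simp only [ifunExp_sum_lt_sub_sum_gt hn, sum_filter, mul_sum, ← sum_neg_distrib]
  refine sum_congr rfl fun m _ => ?_
  split_ifs <;> first | omega | simp

theorem sum_tail_mul_pd_v {n : ℕ} (a : Fin n → ℝ) (i j : ℕ) (x : Fin n → ℝ) :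
    ∑ m : Fin n with i ≤ m.val, x m * pd m (v a j) x = if j ≤ i then 0 else v a j x - v a i x := by
  simp only [pd_v, v, sum_filter]
  split_ifs
  · exact sum_eq_zero fun m _ => by split_ifs <;> first | omega | simp
  · rw [← sum_sub_distrib]
    exact sum_congr rfl fun m _ => by split_ifs <;> first | omega | ring

theorem I_brackets_general (n : ℕ) (hn : Even n) (a : Fin n → ℝ) (k : ℕ)
    (x : Fin n → ℝ) (hx : ∀ i, x i ≠ 0) :
    (∀ j : Fin n, pb (Ifun k) (fun y => y j) x =
      if (j : ℕ) < 2 * k then 0 else -(Ifun k x * x j)) ∧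
    (∀ j : ℕ, j ≤ n → pb (Ifun k) (v a j) x =
      if j ≤ 2 * k then 0 else -(Ifun k x * (v a j x - v a (2 * k) x))) := by
  refine ⟨fun j => ?_, fun j _ => ?_⟩
  · rw [pb_Ifun hn k _ hx]
    simp only [pd_coord, mul_ite, mul_one, mul_zero, sum_ite_eq', mem_filter, mem_univ, true_and]
    split_ifs <;> first | omega | simp
  · rw [pb_Ifun hn k _ hx, sum_tail_mul_pd_v]
    split_ifs <;> simp

/-- brackets of `I_k` with the coordinates and with the `v_j`. -/
theorem I_brackets (n : ℕ) (hn : Even n) (a : Fin n → ℝ) (k : ℕ)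
    (hk1 : 1 ≤ k) (hk2 : k ≤ n / 2)
    (x : Fin n → ℝ) (hx : ∀ i, x i ≠ 0) :
    (∀ j : Fin n, pb (Ifun k) (fun y => y j) x =
      if (j : ℕ) < 2 * k then 0 else -(Ifun k x * x j)) ∧
    (∀ j : ℕ, j ≤ n → pb (Ifun k) (v a j) x =
      if j ≤ 2 * k then 0 else -(Ifun k x * (v a j x - v a (2 * k) x))) :=
  I_brackets_general n hn a k x hx
end

section
/- Let x⁰ ∈ R^n with h₀ := Σ a_i x_i⁰ = 0 and v_i⁰ := Σ_{k≤i} a_k x_k⁰. Then x_i(t) = x_i⁰ / [(1 + t v_{i−1}⁰)(1 + t v_i⁰)] solves ẋ_i = x_i(Σ_{j>i} a_j x_j − Σ_{j<i} a_j x_j) with x(0) = x⁰, on any interval containing 0 where the denominators are nonzero. -/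
open Finset Real

/-- explicit solution of the generalized Lotka–Volterra system when `h₀ = 0` -/
noncomputable def sol0 {n : ℕ} (a : Fin n → ℝ) (x0 : Fin n → ℝ) (t : ℝ) (i : Fin n) : ℝ :=
  x0 i / ((1 + t * v a (i : ℕ) x0) * (1 + t * v a ((i : ℕ) + 1) x0))

/-!
Write `v_j` for the partial sums of `a_k x⁰_k`. Since `v_j - v_{j-1} = a_j x⁰_j`, the weighted
partial sums of the explicit solution telescope: `Σ_{k≤j} a_k x_k(t) = v_j / (1 + t v_j)`. In
particular the full sum vanishes because `v_n = h₀ = 0`, so the right-hand side of the system at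
`x(t)` is `-x_i(t) (v_{i-1}/(1 + t v_{i-1}) + v_i/(1 + t v_i))`, which is exactly the logarithmic
derivative of `x⁰_i / ((1 + t v_{i-1})(1 + t v_i))`.
-/

section PartialSums

variable {n : ℕ} (a x : Fin n → ℝ)

@[simp]
lemma v_zero : v a 0 x = 0 := by
  simp [v]

lemma v_succ (i : ℕ) (hi : i < n) : v a (i + 1) x = v a i x + a ⟨i, hi⟩ * x ⟨i, hi⟩ := by
  have hsplit : ∀ k : Fin n, (if (k : ℕ) < i + 1 then a k * x k else 0)
      = (if (k : ℕ) < i then a k * x k else 0) + if k = ⟨i, hi⟩ then a k * x k else 0 := by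
    intro k
    split_ifs <;> simp_all [Fin.ext_iff] <;> omega
  simp only [v, hsplit, sum_add_distrib, sum_ite_eq', mem_univ, if_true]

lemma v_of_le {j : ℕ} (hj : n ≤ j) : v a j x = ∑ k, a k * x k :=
  sum_congr rfl fun k _ => if_pos (k.isLt.trans_le hj)

lemma rhs_eq_v (i : Fin n) : rhs a x i = x i * (v a n x - v a (i + 1) x - v a i x) := by
  have hupper : ∀ j : Fin n, (if i < j then a j * x j else 0)
      = (if (j : ℕ) < n then a j * x j else 0) - if (j : ℕ) < i + 1 then a j * x j else 0 := by
    intro j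
    simp only [Fin.lt_def]
    split_ifs <;> first | omega | ring
  simp only [rhs, hupper, sum_sub_distrib]
  rfl

end PartialSums

lemma v_sol0 {n : ℕ} (a x0 : Fin n → ℝ) {t : ℝ} (ht : ∀ j ≤ n, 1 + t * v a j x0 ≠ 0) :
    ∀ i ≤ n, v a i (sol0 a x0 t) = v a i x0 / (1 + t * v a i x0) := by
  intro i
  induction i with
  | zero => simp
  | succ i ih =>
    intro hi
    have hb := ht i (by omega)
    have hc := ht (i + 1) hi
    rw [v_succ _ _ i hi, ih (by omega), sol0, ← mul_div_assoc]
    dsimp only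
    rw [v_succ a x0 i hi] at hc ⊢
    rw [div_add_div _ _ hb (mul_ne_zero hb hc), div_eq_div_iff (mul_ne_zero hb (mul_ne_zero hb hc)) hc]
    ring

lemma hasDerivAt_div_one_add_mul_mul (x b c t : ℝ) (hb : 1 + t * b ≠ 0) (hc : 1 + t * c ≠ 0) :
    HasDerivAt (fun s => x / ((1 + s * b) * (1 + s * c)))
      (-(x / ((1 + t * b) * (1 + t * c))) * (b / (1 + t * b) + c / (1 + t * c))) t := by
  have hden : HasDerivAt (fun s : ℝ => (1 + s * b) * (1 + s * c))
      (b * (1 + t * c) + (1 + t * b) * c) t := by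
    refine HasDerivAt.mul ?_ ?_ <;>
      simpa using ((hasDerivAt_id t).mul_const _).const_add 1
  refine ((hasDerivAt_const t x).div hden (mul_ne_zero hb hc)).congr_deriv ?_
  field_simp
  ring

/-- the explicit formula solves the generalized Lotka–Volterra
system with initial condition `x⁰` when `h₀ = 0`, at every time where the
denominators are nonzero. -/
theorem explicit_solution_zero_h0 (n : ℕ) (a : Fin n → ℝ) (x0 : Fin n → ℝ)
    (hh0 : (∑ m, a m * x0 m) = 0) :
    (∀ i, sol0 a x0 0 i = x0 i) ∧
    (∀ t : ℝ,
      (∀ j : ℕ, j ≤ n → 1 + t * v a j x0 ≠ 0) →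
      ∀ i : Fin n, HasDerivAt (fun s => sol0 a x0 s i) (rhs a (sol0 a x0 t) i) t) := by
  refine ⟨fun i => by simp [sol0], fun t ht i => ?_⟩
  have hsum : v a n (sol0 a x0 t) = 0 := by
    rw [v_sol0 a x0 ht n le_rfl, v_of_le a x0 le_rfl, hh0, zero_div]
  rw [rhs_eq_v, hsum, v_sol0 a x0 ht (i + 1) i.isLt, v_sol0 a x0 ht i i.isLt.le]
  refine (hasDerivAt_div_one_add_mul_mul (x0 i) _ _ t (ht i i.isLt.le)
    (ht (i + 1) i.isLt)).congr_deriv ?_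
  simp only [sol0]
  ring
end
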